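/- The family of functions (φ_n)_{n≥1} is locally equi-continuous on X × X. In particular φ₁ is continuous on X × X, and φ₁ is a continuous extension of the restriction of the Mañé potential φ to X² ∖ ΔX (the complement of the diagonal). -/

import Mathlib

open Metric Set Filter Topology

/-- `X` is a `B`-length space at scale `K`. -/
def IsBLengthSpaceAtScale (X : Type*) [MetricSpace X] (B K : ℝ) : Prop :=
  ∀ x y : X, ∃ (n : ℕ) (p : ℕ → X), p 0 = x ∧ p n = y ∧
    (∀ i < n, dist (p i) (p (i + 1)) ≤ K) ∧
    ∑ i ∈ Finset.range n, dist (p i) (p (i + 1)) ≤ B * dist x y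

/-- Uniform superlinearity of the cost `c`. -/
def UniformlySuperlinear {X : Type*} [MetricSpace X] (c : X → X → ℝ) : Prop :=
  ∀ k : ℝ, 0 ≤ k → ∃ C : ℝ, ∀ x y : X, k * dist x y - C ≤ c x y

/-- Uniform boundedness of the cost `c`. -/
def UniformlyBounded {X : Type*} [MetricSpace X] (c : X → X → ℝ) : Prop :=
  ∀ R : ℝ, ∃ A : ℝ, ∀ x y : X, dist x y ≤ R → c x y ≤ A

/-- `u` is `α`-dominated: `u y - u x ≤ c x y + α` for all `x y`. -/
def Dominated {X : Type*} (c : X → X → ℝ) (α : ℝ) (u : X → ℝ) : Prop :=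
  ∀ x y : X, u y - u x ≤ c x y + α

/-- Negative Lax-Oleinik semigroup. -/
noncomputable def Tm {X : Type*} (c : X → X → ℝ) (u : X → ℝ) (x : X) : ℝ :=
  ⨅ y, (u y + c y x)

/-- Positive Lax-Oleinik semigroup. -/
noncomputable def Tp {X : Type*} (c : X → X → ℝ) (u : X → ℝ) (x : X) : ℝ :=
  ⨆ y, (u y - c x y)

/-- The critical constant `α[0]`: the smallest `α` for which `α`-dominated functions exist. -/
noncomputable def critValue {X : Type*} (c : X → X → ℝ) : ℝ :=
  sInf {α : ℝ | ∃ u : X → ℝ, Dominated c α u}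

/-- The Mañé potential `φ(x,y) = sup_u (u y - u x)`, sup over critical sub-solutions. -/
noncomputable def mane {X : Type*} (c : X → X → ℝ) (x y : X) : ℝ :=
  sSup {r : ℝ | ∃ u : X → ℝ, Dominated c (critValue c) u ∧ r = u y - u x}

/-- A bi-infinite sequence is `(u,c,α)`-calibrated if all its finite subchains of
consecutive terms are calibrated. -/
def IsCalibrated {X : Type*} (c : X → X → ℝ) (α : ℝ) (u : X → ℝ) (x : ℤ → X) : Prop :=
  ∀ (m : ℤ) (k : ℕ), u (x (m + k)) =
    u (x m) + (∑ i ∈ Finset.range k, c (x (m + i)) (x (m + i + 1))) + k * α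

/-- The projected Aubry set of a critical sub-solution `u`. -/
def projAubry {X : Type*} (c : X → X → ℝ) (u : X → ℝ) : Set X :=
  {p : X | ∃ x : ℤ → X, IsCalibrated c (critValue c) u x ∧ x 0 = p}

/-- The set `Â_u` of pairs of consecutive terms of calibrated bi-infinite sequences. -/
def aubryPairs {X : Type*} (c : X → X → ℝ) (u : X → ℝ) : Set (X × X) :=
  {q : X × X | ∃ (x : ℤ → X) (n : ℤ),
    IsCalibrated c (critValue c) u x ∧ x n = q.1 ∧ x (n + 1) = q.2}

/-- The projected Aubry set `A = ∩_u A_u`, intersection over all critical sub-solutions. -/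
def projAubrySet {X : Type*} (c : X → X → ℝ) : Set X :=
  {p : X | ∀ u : X → ℝ, Dominated c (critValue c) u → p ∈ projAubry c u}

/-- The Aubry pair set `Â = ∩_u Â_u`, intersection over all critical sub-solutions. -/
def aubryPairsSet {X : Type*} (c : X → X → ℝ) : Set (X × X) :=
  {q : X × X | ∀ u : X → ℝ, Dominated c (critValue c) u → q ∈ aubryPairs c u}

/-- `c_n(x,y)`: infimum of total cost over chains of length `n` from `x` to `y`. -/
noncomputable def cChain {X : Type*} (c : X → X → ℝ) (n : ℕ) (x y : X) : ℝ :=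
  sInf {r : ℝ | ∃ p : ℕ → X, p 0 = x ∧ p n = y ∧
    r = ∑ i ∈ Finset.range n, c (p i) (p (i + 1))}

/-- `φ_n(x,y) = inf_{k ≥ n} (c_k(x,y) + k·α)`. -/
noncomputable def phiN {X : Type*} (c : X → X → ℝ) (α : ℝ) (n : ℕ) (x y : X) : ℝ :=
  sInf {r : ℝ | ∃ k : ℕ, n ≤ k ∧ r = cChain c k x y + k * α}

/-- The Peierls barrier, with values in the extended reals. -/
noncomputable def peierls {X : Type*} (c : X → X → ℝ) (α : ℝ) (x y : X) : EReal :=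
  Filter.liminf (fun n : ℕ => ((cChain c n x y + n * α : ℝ) : EReal)) Filter.atTop

/-- Negative Lax-Oleinik semigroup on extended-real-valued functions. -/
noncomputable def eTm {X : Type*} (c : X → X → ℝ) (u : X → EReal) (x : X) : EReal :=
  ⨅ y, (u y + (c y x : EReal))

/-- Positive Lax-Oleinik semigroup on extended-real-valued functions. -/
noncomputable def eTp {X : Type*} (c : X → X → ℝ) (u : X → EReal) (x : X) : EReal :=
  ⨆ y, (u y - (c x y : EReal))

/-!
Write `α = α[0]`. A chain from `x` to `y` closed up by the jump `y → x` is a loop, and loops have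
nonnegative `α`-cost, so every `φ_n(x, y)` is bounded below by `-(c y x + α)`.

In a `B`-length space a long jump `a → b` can be replaced by a chain of `O(d(a, b))` jumps of
length at most `2K`; by superlinearity of `c` this chain is cheaper. Hence near-optimal chains for
`φ_n(x, y)` may be assumed to start with a jump of length at most some fixed `R`, and moving `x`
changes only the cost of that jump, uniformly in `n` and `y` by uniform continuity of `c` on a
compact set. Reversing chains, i.e. replacing `c` by `flip c`, handles the second variable.

Finally `z ↦ φ_1(x, z)`, reset to `0` at `x`, is a critical sub-solution, while every critical
sub-solution satisfies `u y - u x ≤ φ_1(x, y)`; so `φ_1` is the Mañé potential off the diagonal.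
-/

lemma equicontinuous_of_eventually_dist_le {ι X Y : Type*} [TopologicalSpace X]
    [TopologicalSpace Y] {F : ι → X → Y → ℝ}
    (hx : ∀ x₀ ε, 0 < ε → ∀ᶠ x in 𝓝 x₀, ∀ i y, dist (F i x y) (F i x₀ y) ≤ ε)
    (hy : ∀ y₀ ε, 0 < ε → ∀ᶠ y in 𝓝 y₀, ∀ i x, dist (F i x y) (F i x y₀) ≤ ε) :
    Equicontinuous fun i (q : X × Y) => F i q.1 q.2 := by
  rintro ⟨x₀, y₀⟩
  rw [Metric.equicontinuousAt_iff_right]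
  intro ε hε
  rw [nhds_prod_eq]
  filter_upwards [(hx x₀ (ε / 3) (by positivity)).prod_mk (hy y₀ (ε / 3) (by positivity))]
    with q ⟨hqx, hqy⟩ i
  calc dist (F i x₀ y₀) (F i q.1 q.2)
      ≤ dist (F i x₀ q.2) (F i x₀ y₀) + dist (F i q.1 q.2) (F i x₀ q.2) := by
        rw [dist_comm (F i x₀ q.2), dist_comm (F i q.1 q.2)]
        exact dist_triangle _ _ _
    _ ≤ ε / 3 + ε / 3 := add_le_add (hqy i x₀) (hqx i q.2)
    _ < ε := by linarith

section

variable {X : Type*}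

def chainCost (c : X → X → ℝ) (k : ℕ) (p : ℕ → X) : ℝ :=
  ∑ i ∈ Finset.range k, c (p i) (p (i + 1))

def chainAppend (p : ℕ → X) (k : ℕ) (q : ℕ → X) : ℕ → X :=
  fun i => if i < k then p i else q (i - k)

section Chains

variable {c : X → X → ℝ} {k : ℕ} {p q : ℕ → X}

lemma chainCost_congr (h : ∀ i ≤ k, p i = q i) : chainCost c k p = chainCost c k q :=
  Finset.sum_congr rfl fun i hi => by
    rw [Finset.mem_range] at hi
    rw [h i hi.le, h (i + 1) hi]

lemma chainCost_succ (c : X → X → ℝ) (k : ℕ) (p : ℕ → X) :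
    chainCost c (k + 1) p = chainCost c k p + c (p k) (p (k + 1)) :=
  Finset.sum_range_succ _ _

lemma chainCost_succ' (c : X → X → ℝ) (k : ℕ) (p : ℕ → X) :
    chainCost c (k + 1) p = c (p 0) (p 1) + chainCost c k (fun i => p (i + 1)) := by
  rw [chainCost, Finset.sum_range_succ', add_comm]
  rfl

lemma chainCost_add (c : X → X → ℝ) (k m : ℕ) (p : ℕ → X) :
    chainCost c (k + m) p = chainCost c k p + chainCost c m (fun i => p (k + i)) := by
  simp only [chainCost, Finset.sum_range_add, Nat.add_assoc]

lemma chainAppend_of_le (hpq : p k = q 0) {i : ℕ} (hi : i ≤ k) : chainAppend p k q i = p i := by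
  rcases hi.lt_or_eq with hi | rfl
  · simp [chainAppend, hi]
  · simp [chainAppend, hpq]

lemma chainAppend_add (p : ℕ → X) (k : ℕ) (q : ℕ → X) (i : ℕ) :
    chainAppend p k q (k + i) = q i := by
  simp [chainAppend]

lemma chainCost_chainAppend (hpq : p k = q 0) (m : ℕ) :
    chainCost c (k + m) (chainAppend p k q) = chainCost c k p + chainCost c m q := by
  rw [chainCost_add, chainCost_congr fun i hi => chainAppend_of_le hpq hi]
  simp only [chainAppend_add]

lemma chainCost_update_succ (c : X → X → ℝ) (k : ℕ) (p : ℕ → X) (z : X) :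
    chainCost c (k + 1) (Function.update p (k + 1) z) = chainCost c k p + c (p k) z := by
  rw [chainCost_succ, Function.update_self, Function.update_of_ne k.succ_ne_self.symm]
  congr 1
  exact chainCost_congr fun i hi => Function.update_of_ne (by omega) _ _

lemma chainCost_update_zero (c : X → X → ℝ) (k : ℕ) (p : ℕ → X) (z : X) :
    chainCost c (k + 1) (Function.update p 0 z) + c (p 0) (p 1) =
      chainCost c (k + 1) p + c z (p 1) := by
  simp only [chainCost_succ', Function.update_self,
    Function.update_of_ne (Nat.succ_ne_zero _)]
  ring

lemma chainCost_flip_reverse (c : X → X → ℝ) (k : ℕ) (p : ℕ → X) :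
    chainCost (flip c) k (fun i => p (k - i)) = chainCost c k p := by
  rw [chainCost, chainCost, ← Finset.sum_range_reflect]
  refine Finset.sum_congr rfl fun i hi => ?_
  rw [Finset.mem_range] at hi
  simp only [flip]
  rw [show k - (k - 1 - i + 1) = i by omega, show k - (k - 1 - i) = i + 1 by omega]

end Chains

section CriticalValue

variable {c : X → X → ℝ} {α : ℝ} {u : X → ℝ} {k : ℕ} {p : ℕ → X} {x y : X}

lemma Dominated.sub_le_chainCost (hu : Dominated c α u) (p : ℕ → X) (k : ℕ) :
    u (p k) - u (p 0) ≤ chainCost c k p + k * α := by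
  induction k with
  | zero => simp [chainCost]
  | succ k ih =>
    rw [chainCost_succ]
    push_cast
    linarith [hu (p k) (p (k + 1))]

variable [MetricSpace X]

lemma exists_dominated (hsl : UniformlySuperlinear c) : ∃ α u, Dominated c α u := by
  obtain ⟨C, hC⟩ := hsl 0 le_rfl
  exact ⟨C, 0, fun x y => by simpa [neg_le_iff_add_nonneg] using hC x y⟩

lemma chainCost_add_mul_critValue_nonneg (hsl : UniformlySuperlinear c) (hk : 1 ≤ k)
    (hloop : p k = p 0) : 0 ≤ chainCost c k p + k * critValue c := by
  have hk : (0 : ℝ) < k := by exact_mod_cast hk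
  have : -chainCost c k p / k ≤ critValue c := by
    obtain ⟨α, u, hu⟩ := exists_dominated hsl
    refine le_csInf ⟨α, u, hu⟩ ?_
    rintro β ⟨v, hv⟩
    rw [div_le_iff₀ hk]
    linarith [hloop ▸ hv.sub_le_chainCost p k]
  rw [div_le_iff₀ hk] at this
  linarith

lemma neg_le_chainCost_add_mul_critValue (hsl : UniformlySuperlinear c) (hk : 1 ≤ k)
    (h0 : p 0 = x) (hky : p k = y) :
    -(c y x + critValue c) ≤ chainCost c k p + k * critValue c := by
  have hloop := chainCost_add_mul_critValue_nonneg hsl (Nat.le_add_left 1 k)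
    (p := Function.update p (k + 1) x)
    (by rw [Function.update_self, Function.update_of_ne (by omega), h0])
  rw [chainCost_update_succ, hky] at hloop
  push_cast at hloop
  linarith

end CriticalValue

section Potentials

variable {c : X → X → ℝ} {α : ℝ} {k n : ℕ} {p : ℕ → X} {x y : X} {b : ℝ}

lemma le_cChain (hk : 1 ≤ k) (h : ∀ p : ℕ → X, p 0 = x → p k = y → b ≤ chainCost c k p) :
    b ≤ cChain c k x y := by
  refine le_csInf ⟨_, fun i => if i = 0 then x else y, rfl, if_neg (by omega), rfl⟩ ?_
  rintro _ ⟨p, h0, hk, rfl⟩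
  exact h p h0 hk

lemma le_phiN (hn : 1 ≤ n)
    (h : ∀ k (p : ℕ → X), n ≤ k → p 0 = x → p k = y → b ≤ chainCost c k p + k * α) :
    b ≤ phiN c α n x y := by
  refine le_csInf ⟨_, n, le_rfl, rfl⟩ ?_
  rintro _ ⟨k, hk, rfl⟩
  have := le_cChain (b := b - k * α) (hn.trans hk) fun p h0 hky => by linarith [h k p hk h0 hky]
  linarith

lemma exists_chainCost_lt_phiN_add (hn : 1 ≤ n) (x y : X) {ε : ℝ} (hε : 0 < ε) :
    ∃ k p, n ≤ k ∧ p 0 = x ∧ p k = y ∧ chainCost c k p + k * α < phiN c α n x y + ε := by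
  by_contra! h
  have := le_phiN hn fun k p hk h0 hky => h k p hk h0 hky
  linarith

lemma Dominated.sub_le_phiN {u : X → ℝ} (hu : Dominated c α u) (hn : 1 ≤ n) :
    u y - u x ≤ phiN c α n x y :=
  le_phiN hn fun k p _ h0 hky => h0 ▸ hky ▸ hu.sub_le_chainCost p k

variable [MetricSpace X]

lemma neg_le_phiN (hsl : UniformlySuperlinear c) (hn : 1 ≤ n) :
    -(c y x + critValue c) ≤ phiN c (critValue c) n x y :=
  le_phiN hn fun _ _ hk h0 hky => neg_le_chainCost_add_mul_critValue hsl (hn.trans hk) h0 hky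

lemma phiN_le_chainCost (hsl : UniformlySuperlinear c) (hn : 1 ≤ n) (hnk : n ≤ k)
    (h0 : p 0 = x) (hky : p k = y) :
    phiN c (critValue c) n x y ≤ chainCost c k p + k * critValue c := by
  have hk := hn.trans hnk
  have hcChain : cChain c k x y ≤ chainCost c k p := by
    refine csInf_le ⟨-(c y x + critValue c) - k * critValue c, ?_⟩ ⟨p, h0, hky, rfl⟩
    rintro _ ⟨q, hq0, hqk, rfl⟩
    show _ ≤ chainCost c k q
    linarith [neg_le_chainCost_add_mul_critValue hsl hk hq0 hqk]
  have hphiN : phiN c (critValue c) n x y ≤ cChain c k x y + k * critValue c := by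
    refine csInf_le ⟨-(c y x + critValue c), ?_⟩ ⟨k, hnk, rfl⟩
    rintro _ ⟨j, hj, rfl⟩
    have := le_cChain (b := -(c y x + critValue c) - j * critValue c) (hn.trans hj)
      fun q hq0 hqj => by
        linarith [neg_le_chainCost_add_mul_critValue hsl (hn.trans hj) hq0 hqj]
    linarith
  linarith

lemma phiN_le_phiN_add_cost (hsl : UniformlySuperlinear c) (hn : 1 ≤ n) (x y z : X) :
    phiN c (critValue c) n x z ≤ phiN c (critValue c) n x y + c y z + critValue c := by
  refine le_of_forall_pos_lt_add fun ε hε => ?_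
  obtain ⟨k, p, hnk, h0, hky, hp⟩ :=
    exists_chainCost_lt_phiN_add (c := c) (α := critValue c) hn x y hε
  have := phiN_le_chainCost hsl hn (hnk.trans k.le_succ) (p := Function.update p (k + 1) z)
    (by rw [Function.update_of_ne (by omega), h0]) (Function.update_self ..)
  rw [chainCost_update_succ, hky] at this
  push_cast at this
  linarith

end Potentials

section Mane

variable [MetricSpace X] {c : X → X → ℝ}

lemma dominated_update_phiN [DecidableEq X] (hsl : UniformlySuperlinear c) (x : X) :
    Dominated c (critValue c) (Function.update (phiN c (critValue c) 1 x) x 0) := by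
  intro a b
  rcases eq_or_ne a b with rfl | hab
  · simpa [chainCost] using chainCost_add_mul_critValue_nonneg hsl le_rfl (p := fun _ => a) rfl
  rcases eq_or_ne b x with rfl | hb
  · rw [Function.update_self, Function.update_of_ne hab]
    linarith [neg_le_phiN hsl le_rfl (c := c) (x := b) (y := a)]
  rw [Function.update_of_ne hb]
  rcases eq_or_ne a x with rfl | ha
  · simpa [chainCost] using phiN_le_chainCost hsl le_rfl le_rfl (x := a) (y := b)
      (p := fun i => if i = 0 then a else b) rfl (by simp)
  · rw [Function.update_of_ne ha]
    linarith [phiN_le_phiN_add_cost hsl le_rfl x a b]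

lemma phiN_one_eq_mane (hsl : UniformlySuperlinear c) {x y : X} (hxy : x ≠ y) :
    phiN c (critValue c) 1 x y = mane c x y := by
  classical
  refine (IsGreatest.csSup_eq ?_).symm
  refine ⟨⟨_, dominated_update_phiN hsl x, ?_⟩, ?_⟩
  · simp [Function.update_of_ne hxy.symm]
  · rintro _ ⟨u, hu, rfl⟩
    exact hu.sub_le_phiN le_rfl

end Mane

section Reversal

variable {c : X → X → ℝ}

lemma dominated_flip_iff {α : ℝ} {u : X → ℝ} : Dominated (flip c) α u ↔ Dominated c α (-u) := by
  simp only [Dominated, flip, Pi.neg_apply]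
  exact ⟨fun hu x y => by linarith [hu y x], fun hu x y => by linarith [hu y x]⟩

lemma critValue_flip : critValue (flip c) = critValue c := by
  refine congrArg sInf (Set.ext fun α => ⟨fun ⟨u, hu⟩ => ⟨-u, dominated_flip_iff.1 hu⟩,
    fun ⟨u, hu⟩ => ⟨-u, dominated_flip_iff.2 (by simpa using hu)⟩⟩)

lemma cChain_flip (k : ℕ) (x y : X) : cChain (flip c) k y x = cChain c k x y := by
  have reverse : ∀ (c : X → X → ℝ) (x y : X),
      {r | ∃ p : ℕ → X, p 0 = x ∧ p k = y ∧ r = chainCost c k p} ⊆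
        {r | ∃ p : ℕ → X, p 0 = y ∧ p k = x ∧ r = chainCost (flip c) k p} := by
    rintro c x y _ ⟨p, h0, hk, rfl⟩
    exact ⟨fun i => p (k - i), by simpa, by simpa, (chainCost_flip_reverse c k p).symm⟩
  exact congrArg sInf ((reverse c x y).antisymm (reverse (flip c) y x)).symm

lemma phiN_flip (α : ℝ) (n : ℕ) (x y : X) : phiN (flip c) α n y x = phiN c α n x y := by
  simp only [phiN, cChain_flip]

variable [MetricSpace X]

lemma UniformlySuperlinear.flip (hsl : UniformlySuperlinear c) : UniformlySuperlinear (flip c) :=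
  fun k hk => (hsl k hk).imp fun _ hC x y => dist_comm x y ▸ hC y x

lemma UniformlyBounded.flip (hub : UniformlyBounded c) : UniformlyBounded (flip c) :=
  fun R => (hub R).imp fun _ hA x y hxy => hA y x (dist_comm x y ▸ hxy)

end Reversal

section Coarsening

variable [PseudoMetricSpace X] {K : ℝ}

/-- Greedy coarsening: a new point is started only when the current jump would exceed `2 * K`,
so every jump but the last has length at least `K`. -/
lemma exists_coarser_chain (hK : 0 ≤ K) (p : ℕ → X) (N : ℕ)
    (hp : ∀ i < N, dist (p i) (p (i + 1)) ≤ K) :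
    ∃ (m : ℕ) (q : ℕ → X), q 0 = p 0 ∧ q (m + 1) = p N ∧
      (∀ i ≤ m, dist (q i) (q (i + 1)) ≤ 2 * K) ∧
      m * K + dist (q m) (q (m + 1)) ≤ ∑ i ∈ Finset.range N, dist (p i) (p (i + 1)) := by
  induction N with
  | zero =>
    exact ⟨0, fun _ => p 0, rfl, rfl, fun _ _ => by simp only [dist_self]; linarith, by simp⟩
  | succ N ih =>
    obtain ⟨m, q, h0, hlast, hsteps, hsum⟩ := ih fun i hi => hp i (by omega)
    have hd := hp N N.lt_succ_self
    have htri : dist (q m) (p (N + 1)) ≤ dist (q m) (q (m + 1)) + dist (p N) (p (N + 1)) :=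
      hlast ▸ dist_triangle _ _ _
    rw [Finset.sum_range_succ]
    by_cases hmerge : dist (q m) (p (N + 1)) ≤ 2 * K
    · refine ⟨m, Function.update q (m + 1) (p (N + 1)), ?_, Function.update_self .., ?_, ?_⟩
      · rwa [Function.update_of_ne (by omega)]
      · intro i hi
        rw [Function.update_of_ne (by omega)]
        rcases hi.lt_or_eq with hi | rfl
        · rw [Function.update_of_ne (by omega)]
          exact hsteps i hi.le
        · rwa [Function.update_self]
      · rw [Function.update_of_ne (by omega), Function.update_self]
        linarith
    · refine ⟨m + 1, Function.update q (m + 1 + 1) (p (N + 1)), ?_, Function.update_self .., ?_, ?_⟩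
      · rwa [Function.update_of_ne (by omega)]
      · intro i hi
        rw [Function.update_of_ne (by omega)]
        rcases hi.lt_or_eq with hi | rfl
        · rw [Function.update_of_ne (by omega)]
          exact hsteps i (by omega)
        · rw [Function.update_self, hlast]
          linarith
      · rw [Function.update_of_ne (by omega), Function.update_self, hlast]
        push_cast
        linarith

end Coarsening

section Shortcuts

variable [MetricSpace X] {c : X → X → ℝ} {R : ℝ}

def HasShortcuts (c : X → X → ℝ) (R : ℝ) : Prop :=
  ∀ a b : X, R < dist a b → ∃ (m : ℕ) (q : ℕ → X), 1 ≤ m ∧ q 0 = a ∧ q m = b ∧ dist a (q 1) ≤ R ∧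
    chainCost c m q + m * critValue c ≤ c a b + critValue c

lemma exists_hasShortcuts {B K : ℝ} (hB : 0 ≤ B) (hK : 0 < K)
    (hlen : IsBLengthSpaceAtScale X B K) (hsl : UniformlySuperlinear c)
    (hub : UniformlyBounded c) : ∃ R, HasShortcuts c R := by
  obtain ⟨A, hA⟩ := hub (2 * K)
  set M := max (A + critValue c) 0
  have hM : 0 ≤ M := le_max_right _ _
  obtain ⟨C, hC⟩ := hsl (M * B / K + 1) (by positivity)
  refine ⟨max (M + C - critValue c) (2 * K), fun a b hab => ?_⟩
  obtain ⟨N, p, hp0, hpN, hpK, hpB⟩ := hlen a b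
  obtain ⟨m, q, hq0, hqm, hq, hqsum⟩ := exists_coarser_chain hK.le p N hpK
  refine ⟨m + 1, q, by omega, hq0.trans hp0, hqm.trans hpN, ?_, ?_⟩
  · rw [← hp0, ← hq0]
    exact (hq 0 (Nat.zero_le _)).trans (le_max_right _ _)
  have hcost : chainCost c (m + 1) q ≤ (m + 1) * A := by
    calc chainCost c (m + 1) q ≤ ∑ _i ∈ Finset.range (m + 1), A :=
          Finset.sum_le_sum fun i hi => hA _ _ (hq i (by simpa [Nat.lt_succ_iff] using hi))
      _ = (m + 1) * A := by simp
  have hmM : (m : ℝ) * M ≤ M * B / K * dist a b := by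
    have : (m : ℝ) ≤ B * dist a b / K := by
      rw [le_div_iff₀ hK]
      linarith [dist_nonneg (x := q m) (y := q (m + 1))]
    calc (m : ℝ) * M ≤ B * dist a b / K * M := mul_le_mul_of_nonneg_right this hM
      _ = M * B / K * dist a b := by ring
  have hAM : ((m : ℝ) + 1) * (A + critValue c) ≤ (m + 1) * M :=
    mul_le_mul_of_nonneg_left (le_max_left _ _) (by positivity)
  have hfar : M + C - critValue c < dist a b := (le_max_left _ _).trans_lt hab
  push_cast
  linarith [hC a b]

lemma HasShortcuts.exists_chain_first_step_le (hR : HasShortcuts c R) {k : ℕ} {p : ℕ → X}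
    {x : X} (hk : 1 ≤ k) (h0 : p 0 = x) :
    ∃ (k' : ℕ) (r : ℕ → X), k ≤ k' ∧ r 0 = x ∧ r k' = p k ∧ dist x (r 1) ≤ R ∧
      chainCost c k' r + k' * critValue c ≤ chainCost c k p + k * critValue c := by
  obtain ⟨j, rfl⟩ : ∃ j, k = j + 1 := ⟨k - 1, by omega⟩
  by_cases hnear : dist x (p 1) ≤ R
  · exact ⟨j + 1, p, le_rfl, h0, rfl, hnear, le_rfl⟩
  obtain ⟨m, q, hm, hq0, hqm, hq1, hq⟩ := hR x (p 1) (not_le.1 hnear)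
  refine ⟨m + j, chainAppend q m (fun i => p (i + 1)), by omega, ?_, ?_, ?_, ?_⟩
  · rwa [chainAppend_of_le (q := fun i => p (i + 1)) hqm (Nat.zero_le _)]
  · exact chainAppend_add q m _ j
  · rwa [chainAppend_of_le (q := fun i => p (i + 1)) hqm hm]
  · rw [chainCost_chainAppend (q := fun i => p (i + 1)) hqm, chainCost_succ', h0]
    push_cast
    linarith

end Shortcuts

section Equicontinuity

variable [MetricSpace X] {c : X → X → ℝ} {R : ℝ}

lemma HasShortcuts.phiN_le_add_of_cost_le (hR : HasShortcuts c R) (hsl : UniformlySuperlinear c)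
    {n : ℕ} (hn : 1 ≤ n) {x x' : X} {ε : ℝ} (h : ∀ z, dist x z ≤ R → c x' z ≤ c x z + ε)
    (y : X) : phiN c (critValue c) n x' y ≤ phiN c (critValue c) n x y + ε := by
  refine le_of_forall_pos_lt_add fun δ hδ => ?_
  obtain ⟨k, p, hnk, h0, hky, hp⟩ :=
    exists_chainCost_lt_phiN_add (c := c) (α := critValue c) hn x y hδ
  obtain ⟨k', r, hkk', hr0, hrk, hr1, hr⟩ := hR.exists_chain_first_step_le (hn.trans hnk) h0
  obtain ⟨j, rfl⟩ : ∃ j, k' = j + 1 := ⟨k' - 1, by omega⟩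
  have hstart := phiN_le_chainCost hsl hn (hnk.trans hkk') (p := Function.update r 0 x')
    (Function.update_self ..)
    (by rw [Function.update_of_ne (by omega), hrk, hky])
  have hswap := chainCost_update_zero c j r x'
  rw [hr0] at hswap
  linarith [h _ hr1]

lemma HasShortcuts.eventually_dist_phiN_le [ProperSpace X] (hR : HasShortcuts c R)
    (hcont : Continuous fun q : X × X => c q.1 q.2) (hsl : UniformlySuperlinear c) (x₀ : X)
    {ε : ℝ} (hε : 0 < ε) :
    ∀ᶠ x in 𝓝 x₀, ∀ n, 1 ≤ n → ∀ y,
      dist (phiN c (critValue c) n x y) (phiN c (critValue c) n x₀ y) ≤ ε := by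
  obtain ⟨v, hv, hvc⟩ := (isCompact_closedBall x₀ (R + 1)).mem_uniformity_of_prod
    (s := univ) hcont.continuousOn (mem_univ x₀) (dist_mem_uniformity hε)
  rw [nhdsWithin_univ] at hv
  filter_upwards [hv, ball_mem_nhds x₀ one_pos] with x hxv hx n hn y
  have hclose : ∀ z, dist z x₀ ≤ R + 1 → |c x z - c x₀ z| < ε := fun z hz =>
    hvc x hxv z (mem_closedBall.2 hz)
  rw [mem_ball] at hx
  have hleft : phiN c (critValue c) n x y ≤ phiN c (critValue c) n x₀ y + ε :=
    hR.phiN_le_add_of_cost_le hsl hn (fun z hz => by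
      linarith [(abs_lt.1 (hclose z (by rw [dist_comm]; linarith))).2]) y
  have hright : phiN c (critValue c) n x₀ y ≤ phiN c (critValue c) n x y + ε :=
    hR.phiN_le_add_of_cost_le hsl hn (fun z hz => by
      linarith [(abs_lt.1 (hclose z (by linarith [dist_triangle z x x₀, dist_comm x z]))).1]) y
  rw [Real.dist_eq, abs_sub_le_iff]
  constructor <;> linarith

end Equicontinuity

end

theorem phiN_locally_equicontinuous_general {X : Type*} [MetricSpace X] [ProperSpace X]
    {B K : ℝ} (hB : 1 ≤ B) (hK : 0 < K) (hlen : IsBLengthSpaceAtScale X B K)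
    {c : X → X → ℝ} (hcont : Continuous fun q : X × X => c q.1 q.2)
    (hsl : UniformlySuperlinear c) (hub : UniformlyBounded c) :
    Equicontinuous (fun n : {n : ℕ // 1 ≤ n} =>
      fun q : X × X => phiN c (critValue c) n.1 q.1 q.2) ∧
    Continuous (fun q : X × X => phiN c (critValue c) 1 q.1 q.2) ∧
    (∀ x y : X, x ≠ y → phiN c (critValue c) 1 x y = mane c x y) := by
  obtain ⟨R, hR⟩ := exists_hasShortcuts (zero_le_one.trans hB) hK hlen hsl hub
  obtain ⟨R', hR'⟩ := exists_hasShortcuts (zero_le_one.trans hB) hK hlen hsl.flip hub.flip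
  have hequi : Equicontinuous fun n : {n : ℕ // 1 ≤ n} =>
      fun q : X × X => phiN c (critValue c) n.1 q.1 q.2 := by
    refine equicontinuous_of_eventually_dist_le (fun x₀ ε hε => ?_) (fun y₀ ε hε => ?_)
    · exact (hR.eventually_dist_phiN_le hcont hsl x₀ hε).mono fun x h n y => h n.1 n.2 y
    · refine (hR'.eventually_dist_phiN_le (hcont.comp continuous_swap) hsl.flip y₀ hε).mono
        fun y h n x => ?_
      simpa only [critValue_flip, phiN_flip] using h n.1 n.2 x
  exact ⟨hequi, hequi.continuous ⟨1, le_rfl⟩, fun x y hxy => phiN_one_eq_mane hsl hxy⟩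

theorem phiN_locally_equicontinuous {X : Type*} [MetricSpace X] [Nonempty X] [ProperSpace X]
    {B K : ℝ} (hB : 1 ≤ B) (hK : 0 < K) (hlen : IsBLengthSpaceAtScale X B K)
    {c : X → X → ℝ} (hcont : Continuous fun q : X × X => c q.1 q.2)
    (hsl : UniformlySuperlinear c) (hub : UniformlyBounded c) :
    Equicontinuous (fun n : {n : ℕ // 1 ≤ n} =>
      fun q : X × X => phiN c (critValue c) n.1 q.1 q.2) ∧
    Continuous (fun q : X × X => phiN c (critValue c) 1 q.1 q.2) ∧
    (∀ x y : X, x ≠ y → phiN c (critValue c) 1 x y = mane c x y) :=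
  phiN_locally_equicontinuous_general hB hK hlen hcont hsl hub
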